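/- arXiv:2411.01936 — 5 statements merged into one kernel-verified Lean document; each statement's English description precedes it below -/
import Mathlib

section
/- Let g be the symmetric bilinear form field on U = {(ρ,φ,x,y) ∈ ℝ⁴ : ρ ≠ 0} given by g = ρ⁴ dρ² + ρ² dφ² − dx² − dy². For each t ∈ ℝ, the diffeomorphism Φ_t(ρ,φ,x,y) = (eᵗρ, e²ᵗφ, e³ᵗx, e³ᵗy) is a conformal transformation: the pullback of g under Φ_t equals e⁶ᵗ · g, i.e., for every point p and tangent vectors v,w, g_{Φ_t(p)}(DΦ_t v, DΦ_t w) = e⁶ᵗ g_p(v,w). -/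
/-- The scaling `Φ_t(ρ,φ,x,y) = (eᵗρ, e²ᵗφ, e³ᵗx, e³ᵗy)` is a conformal
transformation of the metric `g = ρ⁴dρ² + ρ²dφ² − dx² − dy²` on `{ρ ≠ 0}`:
pulling back `g` multiplies it by `e⁶ᵗ`. -/
theorem scaling_conformal_symmetry (t : ℝ) (p v w : Fin 4 → ℝ) (hp : p 0 ≠ 0) :
    let g : (Fin 4 → ℝ) → (Fin 4 → ℝ) → (Fin 4 → ℝ) → ℝ := fun q a b =>
      (q 0) ^ 4 * (a 0) * (b 0) + (q 0) ^ 2 * (a 1) * (b 1) - (a 2) * (b 2) - (a 3) * (b 3)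
    let Φ : (Fin 4 → ℝ) → (Fin 4 → ℝ) := fun q =>
      ![Real.exp t * q 0, Real.exp (2 * t) * q 1, Real.exp (3 * t) * q 2,
        Real.exp (3 * t) * q 3]
    let D : (Fin 4 → ℝ) → (Fin 4 → ℝ) := fun a =>
      ![Real.exp t * a 0, Real.exp (2 * t) * a 1, Real.exp (3 * t) * a 2,
        Real.exp (3 * t) * a 3]
    g (Φ p) (D v) (D w) = Real.exp (6 * t) * g p v w := by
  intro g Φ D
  simp only [g, Φ, D, Matrix.cons_val_zero, Matrix.cons_val_one, Matrix.head_cons,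
    Matrix.cons_val_fin_one, Matrix.cons_val_two, Matrix.cons_val_three, Matrix.tail_cons]
  have h : ∀ s : ℝ, Real.exp s = Real.exp s := fun _ => rfl
  rw [show (6:ℝ)*t = t+t+t+t+t+t by ring]
  simp only [Real.exp_add, show (2:ℝ)*t = t+t by ring, show (3:ℝ)*t = t+t+t by ring]
  ring
end

section
/- For every real number l, writing u = l−4, v = l−5, w = l−6, z = l−7, the polynomial identity 10uvwz − 70u²vw − 49u²v² + 280u³v − 175u⁴ = −4·l·(l − 3/2)·(l − 5/2)·(l − 4) holds. Consequently, for x > 0, the function Θ(x) = x^l satisfies the 8th-order ODE 10(Θ⁽⁴⁾)³Θ⁽⁸⁾ − 70(Θ⁽⁴⁾)²Θ⁽⁵⁾Θ⁽⁷⁾ − 49(Θ⁽⁴⁾)²(Θ⁽⁶⁾)² + 280Θ⁽⁴⁾(Θ⁽⁵⁾)²Θ⁽⁶⁾ − 175(Θ⁽⁵⁾)⁴ = 0 if and only if l ∈ {0, 1, 2, 3, 3/2, 5/2, 4}. -/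
lemma rpow_iter (l : ℝ) (n : ℕ) : ∀ x : ℝ, 0 < x →
    iteratedDeriv n (fun x : ℝ => x ^ l) x
      = (∏ i ∈ Finset.range n, (l - i)) * x ^ (l - n) := by
  induction n with
  | zero => intro x hx; simp
  | succ n ih =>
    intro x hx
    rw [iteratedDeriv_succ]
    have hev : iteratedDeriv n (fun x : ℝ => x ^ l)
        =ᶠ[nhds x] fun y => (∏ i ∈ Finset.range n, (l - i)) * y ^ (l - n) := by
      filter_upwards [Ioi_mem_nhds hx] with y hy using ih y hy
    rw [hev.deriv_eq]
    have hd : HasDerivAt (fun y : ℝ => (∏ i ∈ Finset.range n, (l - i)) * y ^ (l - n))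
        ((∏ i ∈ Finset.range n, (l - i)) * ((l - n) * x ^ (l - n - 1))) x :=
      (Real.hasDerivAt_rpow_const (Or.inl hx.ne')).const_mul _
    rw [hd.deriv, Finset.prod_range_succ]
    rw [show l - (n:ℝ) - 1 = l - ((n:ℕ)+1 : ℕ) by push_cast; ring, mul_assoc]

lemma key (l x : ℝ) (hx : 0 < x) :
    10 * (iteratedDeriv 4 (fun x : ℝ => x ^ l) x) ^ 3 * iteratedDeriv 8 (fun x : ℝ => x ^ l) x
      - 70 * (iteratedDeriv 4 (fun x : ℝ => x ^ l) x) ^ 2 * iteratedDeriv 5 (fun x : ℝ => x ^ l) x * iteratedDeriv 7 (fun x : ℝ => x ^ l) x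
      - 49 * (iteratedDeriv 4 (fun x : ℝ => x ^ l) x) ^ 2 * (iteratedDeriv 6 (fun x : ℝ => x ^ l) x) ^ 2
      + 280 * iteratedDeriv 4 (fun x : ℝ => x ^ l) x * (iteratedDeriv 5 (fun x : ℝ => x ^ l) x) ^ 2 * iteratedDeriv 6 (fun x : ℝ => x ^ l) x
      - 175 * (iteratedDeriv 5 (fun x : ℝ => x ^ l) x) ^ 4
    = ((l * (l - 1) * (l - 2) * (l - 3)) ^ 4
        * (-4 * l * (l - 3 / 2) * (l - 5 / 2) * (l - 4)))
        * (x ^ l) ^ 4 * (x ^ (20:ℕ))⁻¹ := by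
  have hsub : ∀ n : ℕ, x ^ (l - n) = x ^ l * (x ^ n)⁻¹ := by
    intro n
    rw [Real.rpow_sub hx, Real.rpow_natCast, div_eq_mul_inv]
  rw [rpow_iter l 4 x hx, rpow_iter l 5 x hx, rpow_iter l 6 x hx,
    rpow_iter l 7 x hx, rpow_iter l 8 x hx, hsub 4, hsub 5, hsub 6, hsub 7, hsub 8]
  simp only [Finset.prod_range_succ, Finset.prod_range_zero]
  push_cast
  field_simp
  ring

/-- With `u = l−4, v = l−5, w = l−6, z = l−7`, the polynomial identity
`10uvwz − 70u²vw − 49u²v² + 280u³v − 175u⁴ = −4·l·(l−3/2)·(l−5/2)·(l−4)` holds;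
consequently for `x > 0` the function `Θ(x) = x^l` satisfies the 8th-order
G₂-symmetry ODE if and only if `l ∈ {0, 1, 2, 3, 3/2, 5/2, 4}`. -/
theorem g2_ode_for_power_functions (l : ℝ) :
    (let u := l - 4; let v := l - 5; let w := l - 6; let z := l - 7
     10 * u * v * w * z - 70 * u ^ 2 * v * w - 49 * u ^ 2 * v ^ 2
       + 280 * u ^ 3 * v - 175 * u ^ 4
       = -4 * l * (l - 3 / 2) * (l - 5 / 2) * (l - 4)) ∧
    (let Θ : ℝ → ℝ := fun x => x ^ l
     ((∀ x : ℝ, 0 < x →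
        10 * (iteratedDeriv 4 Θ x) ^ 3 * iteratedDeriv 8 Θ x
          - 70 * (iteratedDeriv 4 Θ x) ^ 2 * iteratedDeriv 5 Θ x * iteratedDeriv 7 Θ x
          - 49 * (iteratedDeriv 4 Θ x) ^ 2 * (iteratedDeriv 6 Θ x) ^ 2
          + 280 * iteratedDeriv 4 Θ x * (iteratedDeriv 5 Θ x) ^ 2 * iteratedDeriv 6 Θ x
          - 175 * (iteratedDeriv 5 Θ x) ^ 4 = 0)
       ↔ (l = 0 ∨ l = 1 ∨ l = 2 ∨ l = 3 ∨ l = 3 / 2 ∨ l = 5 / 2 ∨ l = 4))) := by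
  refine ⟨by ring, ?_⟩
  intro Θ
  constructor
  · intro h
    have h1 := h 1 one_pos
    rw [show Θ = fun x : ℝ => x ^ l from rfl] at h1
    rw [key l 1 one_pos] at h1
    simp only [Real.one_rpow, one_pow, inv_one, mul_one, one_mul] at h1
    have h2 : (l * (l - 1) * (l - 2) * (l - 3)) = 0 ∨
        (-4 * l * (l - 3 / 2) * (l - 5 / 2) * (l - 4)) = 0 := by
      rcases mul_eq_zero.mp h1 with h | h
      · exact Or.inl (pow_eq_zero_iff (by norm_num) |>.mp h)
      · exact Or.inr h
    rcases h2 with h | h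
    · rcases mul_eq_zero.mp h with h | h
      · rcases mul_eq_zero.mp h with h | h
        · rcases mul_eq_zero.mp h with h | h
          · exact Or.inl h
          · exact Or.inr (Or.inl (by linarith [sub_eq_zero.mp h]))
        · exact Or.inr (Or.inr (Or.inl (by linarith [sub_eq_zero.mp h])))
      · exact Or.inr (Or.inr (Or.inr (Or.inl (by linarith [sub_eq_zero.mp h]))))
    · rcases mul_eq_zero.mp h with h | h
      · rcases mul_eq_zero.mp h with h | h
        · rcases mul_eq_zero.mp h with h | h
          · exact Or.inl (by nlinarith [mul_eq_zero.mp h])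
          · exact Or.inr (Or.inr (Or.inr (Or.inr (Or.inl (by linarith [sub_eq_zero.mp h])))))
        · exact Or.inr (Or.inr (Or.inr (Or.inr (Or.inr (Or.inl (by linarith [sub_eq_zero.mp h]))))))
      · exact Or.inr (Or.inr (Or.inr (Or.inr (Or.inr (Or.inr (by linarith [sub_eq_zero.mp h]))))))
  · intro hl x hx
    rw [show Θ = fun x : ℝ => x ^ l from rfl, key l x hx]
    rcases hl with h | h | h | h | h | h | h <;> subst h <;> norm_num
end

section
/- Let S = span{E₂₁, E₃₁, E₄₁, E₄₂, E₄₃} ⊂ sl(4,ℂ), and let F be the set of all matrices T = [[z − g a₁, 0, 0, 0], [a₃, g a₁, f a₁, 0], [a₄, a₁, g a₁, 0], [a₅, a₂, t, −z − g a₁]] where f, g are fixed scalars and z, a₁,...,a₅, t range over ℂ. Then: (i) [T, Y] ∈ S for every T ∈ F and Y ∈ S; (ii) S is a nilpotent Lie subalgebra of sl(4,ℂ); (iii) choosing T with a₁ = a₂ = 1 and all other parameters 0, repeated brackets of elements of F with E₂₁ and E₄₃ generate all of S, so S is the smallest subspace containing E₂₁ and E₄₃ that is invariant under ad(T) for all T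 ∈ F. -/
section M7aux

private lemma m7_mem_span_five (a b c d e : ℂ) :
    (!![0,0,0,0; a,0,0,0; b,0,0,0; c,d,e,0] : Matrix (Fin 4) (Fin 4) ℂ) ∈
    Submodule.span ℂ ({Matrix.single 1 0 (1:ℂ), Matrix.single 2 0 1,
      Matrix.single 3 0 1, Matrix.single 3 1 1, Matrix.single 3 2 1} :
      Set (Matrix (Fin 4) (Fin 4) ℂ)) := by
  have h : (!![0,0,0,0; a,0,0,0; b,0,0,0; c,d,e,0] : Matrix (Fin 4) (Fin 4) ℂ)
      = a • Matrix.single 1 0 1 + b • Matrix.single 2 0 1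
        + c • Matrix.single 3 0 1 + d • Matrix.single 3 1 1
        + e • Matrix.single 3 2 1 := by
    ext i j
    fin_cases i <;> fin_cases j <;> simp [Matrix.single, Matrix.vecHead, Matrix.vecTail]
  rw [h]
  refine Submodule.add_mem _ (Submodule.add_mem _ (Submodule.add_mem _ (Submodule.add_mem _
    ?_ ?_) ?_) ?_) ?_ <;>
    exact Submodule.smul_mem _ _ (Submodule.subset_span (by simp))

private lemma m7_shape_of_mem (Y : Matrix (Fin 4) (Fin 4) ℂ)
    (hY : Y ∈ Submodule.span ℂ ({Matrix.single 1 0 (1:ℂ), Matrix.single 2 0 1,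
      Matrix.single 3 0 1, Matrix.single 3 1 1, Matrix.single 3 2 1} :
      Set (Matrix (Fin 4) (Fin 4) ℂ))) :
    ∃ a b c d e : ℂ, Y = !![0,0,0,0; a,0,0,0; b,0,0,0; c,d,e,0] := by
  induction hY using Submodule.span_induction with
  | mem x hx =>
      rcases hx with h | h | h | h | h <;> subst h
      · exact ⟨1,0,0,0,0, by ext i j; fin_cases i <;> fin_cases j <;>
          simp [Matrix.single, Matrix.vecHead, Matrix.vecTail]⟩
      · exact ⟨0,1,0,0,0, by ext i j; fin_cases i <;> fin_cases j <;>
          simp [Matrix.single, Matrix.vecHead, Matrix.vecTail]⟩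
      · exact ⟨0,0,1,0,0, by ext i j; fin_cases i <;> fin_cases j <;>
          simp [Matrix.single, Matrix.vecHead, Matrix.vecTail]⟩
      · exact ⟨0,0,0,1,0, by ext i j; fin_cases i <;> fin_cases j <;>
          simp [Matrix.single, Matrix.vecHead, Matrix.vecTail]⟩
      · exact ⟨0,0,0,0,1, by ext i j; fin_cases i <;> fin_cases j <;>
          simp [Matrix.single, Matrix.vecHead, Matrix.vecTail]⟩
  | zero =>
      exact ⟨0,0,0,0,0, by ext i j; fin_cases i <;> fin_cases j <;>
        simp [Matrix.vecHead, Matrix.vecTail]⟩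
  | add x y _ _ hx hy =>
      obtain ⟨a,b,c,d,e,rfl⟩ := hx
      obtain ⟨a',b',c',d',e',rfl⟩ := hy
      exact ⟨a+a',b+b',c+c',d+d',e+e', by ext i j; fin_cases i <;> fin_cases j <;>
        simp [Matrix.vecHead, Matrix.vecTail]⟩
  | smul r x _ hx =>
      obtain ⟨a,b,c,d,e,rfl⟩ := hx
      exact ⟨r*a,r*b,r*c,r*d,r*e, by ext i j; fin_cases i <;> fin_cases j <;>
        simp [Matrix.vecHead, Matrix.vecTail]⟩

set_option maxHeartbeats 1000000 in
private lemma m7_ad_bracket (f g z a₁ a₂ a₃ a₄ a₅ t a b c d e : ℂ) :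
    (!![z - g * a₁, 0, 0, 0;
        a₃, g * a₁, f * a₁, 0;
        a₄, a₁, g * a₁, 0;
        a₅, a₂, t, -z - g * a₁] : Matrix (Fin 4) (Fin 4) ℂ)
      * !![0,0,0,0; a,0,0,0; b,0,0,0; c,d,e,0]
    - !![0,0,0,0; a,0,0,0; b,0,0,0; c,d,e,0]
      * !![z - g * a₁, 0, 0, 0;
           a₃, g * a₁, f * a₁, 0;
           a₄, a₁, g * a₁, 0;
           a₅, a₂, t, -z - g * a₁]
    = !![0,0,0,0;
         g * a₁ * a + f * a₁ * b - a * (z - g * a₁), 0, 0, 0;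
         a₁ * a + g * a₁ * b - b * (z - g * a₁), 0, 0, 0;
         a₂ * a + t * b - (z + g * a₁) * c - c * (z - g * a₁) - d * a₃ - e * a₄,
           -(z + g * a₁) * d - d * (g * a₁) - e * a₁,
           -(z + g * a₁) * e - d * (f * a₁) - e * (g * a₁), 0] := by
  ext i j
  fin_cases i <;> fin_cases j <;>
    simp [Matrix.mul_apply, Fin.sum_univ_four, Matrix.vecHead, Matrix.vecTail] <;> ring

set_option maxHeartbeats 1000000 in
private lemma m7_bracket_shape (a b c d e a' b' c' d' e' : ℂ) :
    (!![0,0,0,0; a,0,0,0; b,0,0,0; c,d,e,0] : Matrix (Fin 4) (Fin 4) ℂ)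
      * !![0,0,0,0; a',0,0,0; b',0,0,0; c',d',e',0]
    - !![0,0,0,0; a',0,0,0; b',0,0,0; c',d',e',0]
      * !![0,0,0,0; a,0,0,0; b,0,0,0; c,d,e,0]
    = !![0,0,0,0; 0,0,0,0; 0,0,0,0; (d*a'+e*b') - (d'*a+e'*b),0,0,0] := by
  ext i j
  fin_cases i <;> fin_cases j <;>
    simp [Matrix.mul_apply, Fin.sum_univ_four, Matrix.vecHead, Matrix.vecTail] <;> ring

set_option maxHeartbeats 1000000 in
private lemma m7_comm_zero (a b c d e x : ℂ) :
    (!![0,0,0,0; a,0,0,0; b,0,0,0; c,d,e,0] : Matrix (Fin 4) (Fin 4) ℂ)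
      * !![0,0,0,0; 0,0,0,0; 0,0,0,0; x,0,0,0]
    - !![0,0,0,0; 0,0,0,0; 0,0,0,0; x,0,0,0]
      * !![0,0,0,0; a,0,0,0; b,0,0,0; c,d,e,0] = 0 := by
  ext i j
  fin_cases i <;> fin_cases j <;>
    simp [Matrix.mul_apply, Fin.sum_univ_four, Matrix.vecHead, Matrix.vecTail]

private lemma m7_trace_shape (a b c d e : ℂ) :
    Matrix.trace (!![0,0,0,0; a,0,0,0; b,0,0,0; c,d,e,0] : Matrix (Fin 4) (Fin 4) ℂ) = 0 := by
  simp [Matrix.trace, Fin.sum_univ_four, Matrix.vecHead, Matrix.vecTail]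


private lemma m7_std10 : Matrix.single 1 0 (1:ℂ)
    = !![0,0,0,0; 1,0,0,0; 0,0,0,0; 0,0,0,0] := by
  ext i j; fin_cases i <;> fin_cases j <;>
    simp [Matrix.single, Matrix.vecHead, Matrix.vecTail]

private lemma m7_std20 : Matrix.single 2 0 (1:ℂ)
    = !![0,0,0,0; 0,0,0,0; 1,0,0,0; 0,0,0,0] := by
  ext i j; fin_cases i <;> fin_cases j <;>
    simp [Matrix.single, Matrix.vecHead, Matrix.vecTail]

private lemma m7_std30 : Matrix.single 3 0 (1:ℂ)
    = !![0,0,0,0; 0,0,0,0; 0,0,0,0; 1,0,0,0] := by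
  ext i j; fin_cases i <;> fin_cases j <;>
    simp [Matrix.single, Matrix.vecHead, Matrix.vecTail]

private lemma m7_std31 : Matrix.single 3 1 (1:ℂ)
    = !![0,0,0,0; 0,0,0,0; 0,0,0,0; 0,1,0,0] := by
  ext i j; fin_cases i <;> fin_cases j <;>
    simp [Matrix.single, Matrix.vecHead, Matrix.vecTail]

private lemma m7_std32 : Matrix.single 3 2 (1:ℂ)
    = !![0,0,0,0; 0,0,0,0; 0,0,0,0; 0,0,1,0] := by
  ext i j; fin_cases i <;> fin_cases j <;>
    simp [Matrix.single, Matrix.vecHead, Matrix.vecTail]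

set_option maxHeartbeats 1000000 in
private lemma m7_E20_eq (f g : ℂ) :
    Matrix.single 2 0 (1:ℂ)
    = ((!![0 - g * 1, 0, 0, 0; 0, g * 1, f * 1, 0; 0, 1, g * 1, 0; 0, 0, 0, -0 - g * 1] :
          Matrix (Fin 4) (Fin 4) ℂ) * Matrix.single 1 0 1
        - Matrix.single 1 0 1 *
          !![0 - g * 1, 0, 0, 0; 0, g * 1, f * 1, 0; 0, 1, g * 1, 0; 0, 0, 0, -0 - g * 1])
      - (2*g) • Matrix.single 1 0 1 := by
  simp only [m7_std10, m7_std20, m7_std30, m7_std31, m7_std32]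
  ext i j
  fin_cases i <;> fin_cases j <;>
    simp [Matrix.mul_apply, Fin.sum_univ_four, Matrix.vecHead, Matrix.vecTail] <;> ring

set_option maxHeartbeats 1000000 in
private lemma m7_E30_eq (f g : ℂ) :
    Matrix.single 3 0 (1:ℂ)
    = (!![0 - g * 0, 0, 0, 0; 0, g * 0, f * 0, 0; 0, 0, g * 0, 0; 0, 1, 0, -0 - g * 0] :
          Matrix (Fin 4) (Fin 4) ℂ) * Matrix.single 1 0 1
        - Matrix.single 1 0 1 *
          !![0 - g * 0, 0, 0, 0; 0, g * 0, f * 0, 0; 0, 0, g * 0, 0; 0, 1, 0, -0 - g * 0] := by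
  simp only [m7_std10, m7_std20, m7_std30, m7_std31, m7_std32]
  ext i j
  fin_cases i <;> fin_cases j <;>
    simp [Matrix.mul_apply, Fin.sum_univ_four, Matrix.vecHead, Matrix.vecTail] <;> ring

set_option maxHeartbeats 1000000 in
private lemma m7_E31_eq (f g : ℂ) :
    Matrix.single 3 1 (1:ℂ)
    = -((!![0 - g * 1, 0, 0, 0; 0, g * 1, f * 1, 0; 0, 1, g * 1, 0; 0, 0, 0, -0 - g * 1] :
          Matrix (Fin 4) (Fin 4) ℂ) * Matrix.single 3 2 1
        - Matrix.single 3 2 1 *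
          !![0 - g * 1, 0, 0, 0; 0, g * 1, f * 1, 0; 0, 1, g * 1, 0; 0, 0, 0, -0 - g * 1])
      - (2*g) • Matrix.single 3 2 1 := by
  simp only [m7_std10, m7_std20, m7_std30, m7_std31, m7_std32]
  ext i j
  fin_cases i <;> fin_cases j <;>
    simp [Matrix.mul_apply, Fin.sum_univ_four, Matrix.vecHead, Matrix.vecTail] <;> ring

end M7aux

/-- Let `S = span{E₂₁, E₃₁, E₄₁, E₄₂, E₄₃} ⊂ sl(4,ℂ)` and let `F` be the
Cartan-theoretic family of matrices of the M7ₐ model (with fixed scalars `f, g`).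
Then (i) `[F, S] ⊆ S`; (ii) `S` is a (2-step nilpotent) Lie subalgebra of
`sl(4,ℂ)`; (iii) `S` is the smallest subspace containing `E₂₁` and `E₄₃` that is
invariant under `ad T` for all `T ∈ F`. -/
theorem m7_conformal_holonomy (f g : ℂ) :
    let E : Fin 4 → Fin 4 → Matrix (Fin 4) (Fin 4) ℂ :=
      fun i j => Matrix.single i j 1
    let S : Submodule ℂ (Matrix (Fin 4) (Fin 4) ℂ) :=
      Submodule.span ℂ {E 1 0, E 2 0, E 3 0, E 3 1, E 3 2}
    let F : Set (Matrix (Fin 4) (Fin 4) ℂ) :=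
      {T | ∃ z a₁ a₂ a₃ a₄ a₅ t : ℂ,
        T = !![z - g * a₁, 0, 0, 0;
               a₃, g * a₁, f * a₁, 0;
               a₄, a₁, g * a₁, 0;
               a₅, a₂, t, -z - g * a₁]}
    -- (i) invariance under ad of F
    (∀ T ∈ F, ∀ Y ∈ S, T * Y - Y * T ∈ S) ∧
    -- (ii) S is a nilpotent Lie subalgebra of sl(4,ℂ)
    (∀ Y ∈ S, Matrix.trace Y = 0) ∧
    (∀ Y ∈ S, ∀ Z ∈ S, Y * Z - Z * Y ∈ S) ∧
    (∀ Y₁ ∈ S, ∀ Y₂ ∈ S, ∀ Y₃ ∈ S,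
      Y₁ * (Y₂ * Y₃ - Y₃ * Y₂) - (Y₂ * Y₃ - Y₃ * Y₂) * Y₁ = 0) ∧
    -- (iii) S is the smallest ad(F)-invariant subspace containing E₂₁ and E₄₃
    (E 1 0 ∈ S ∧ E 3 2 ∈ S ∧
      ∀ W : Submodule ℂ (Matrix (Fin 4) (Fin 4) ℂ),
        E 1 0 ∈ W → E 3 2 ∈ W →
        (∀ T ∈ F, ∀ Y ∈ W, T * Y - Y * T ∈ W) → S ≤ W) := by
  intro E S F
  have hSdef : S = Submodule.span ℂ ({Matrix.single 1 0 (1:ℂ),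
      Matrix.single 2 0 1, Matrix.single 3 0 1, Matrix.single 3 1 1,
      Matrix.single 3 2 1} : Set (Matrix (Fin 4) (Fin 4) ℂ)) := rfl
  refine ⟨?_, ?_, ?_, ?_, ?_, ?_, ?_⟩
  · -- (i)
    rintro T ⟨z, a₁, a₂, a₃, a₄, a₅, t, rfl⟩ Y hY
    obtain ⟨a,b,c,d,e,rfl⟩ := m7_shape_of_mem Y (hSdef ▸ hY)
    rw [hSdef, m7_ad_bracket]
    exact m7_mem_span_five _ _ _ _ _
  · -- trace
    intro Y hY
    obtain ⟨a,b,c,d,e,rfl⟩ := m7_shape_of_mem Y (hSdef ▸ hY)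
    exact m7_trace_shape _ _ _ _ _
  · -- bracket closure
    intro Y hY Z hZ
    obtain ⟨a,b,c,d,e,rfl⟩ := m7_shape_of_mem Y (hSdef ▸ hY)
    obtain ⟨a',b',c',d',e',rfl⟩ := m7_shape_of_mem Z (hSdef ▸ hZ)
    rw [hSdef, m7_bracket_shape]
    exact m7_mem_span_five 0 0 _ 0 0
  · -- 2-step nilpotency
    intro Y₁ h₁ Y₂ h₂ Y₃ h₃
    obtain ⟨a,b,c,d,e,rfl⟩ := m7_shape_of_mem Y₁ (hSdef ▸ h₁)
    obtain ⟨a',b',c',d',e',rfl⟩ := m7_shape_of_mem Y₂ (hSdef ▸ h₂)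
    obtain ⟨a'',b'',c'',d'',e'',rfl⟩ := m7_shape_of_mem Y₃ (hSdef ▸ h₃)
    rw [m7_bracket_shape, m7_comm_zero]
  · exact Submodule.subset_span (by simp)
  · exact Submodule.subset_span (by simp)
  · -- minimality
    intro W hE10 hE32 hcl
    have hT₁F : (!![0 - g * 1, 0, 0, 0; 0, g * 1, f * 1, 0; 0, 1, g * 1, 0;
        0, 0, 0, -0 - g * 1] : Matrix (Fin 4) (Fin 4) ℂ) ∈ F :=
      ⟨0, 1, 0, 0, 0, 0, 0, rfl⟩
    have hT₂F : (!![0 - g * 0, 0, 0, 0; 0, g * 0, f * 0, 0; 0, 0, g * 0, 0;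
        0, 1, 0, -0 - g * 0] : Matrix (Fin 4) (Fin 4) ℂ) ∈ F :=
      ⟨0, 0, 1, 0, 0, 0, 0, rfl⟩
    have hb₁ := hcl _ hT₁F _ hE10
    have hb₂ := hcl _ hT₂F _ hE10
    have hb₃ := hcl _ hT₁F _ hE32
    have hE20 : Matrix.single 2 0 (1:ℂ) ∈ W := by
      rw [m7_E20_eq f g]
      exact Submodule.sub_mem _ hb₁ (Submodule.smul_mem _ _ hE10)
    have hE30 : Matrix.single 3 0 (1:ℂ) ∈ W := by
      rw [m7_E30_eq f g]; exact hb₂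
    have hE31 : Matrix.single 3 1 (1:ℂ) ∈ W := by
      rw [m7_E31_eq f g]
      exact Submodule.sub_mem _ (Submodule.neg_mem _ hb₃) (Submodule.smul_mem _ _ hE32)
    rw [hSdef, Submodule.span_le]
    rintro X (rfl | rfl | rfl | rfl | rfl)
    · exact hE10
    · exact hE20
    · exact hE30
    · exact hE31
    · exact hE32
end

section
/- On ℝ⁵ with coordinates (x,y,u,v,ξ), define the 1-forms ω¹ = 2e^{2v}ξ dx − 2e^{2v}ξu dy + ξ du − (ξu−1)dv, ω² = dy − ξ dx, ω³ = dξ − 4e^{2v}ξ²(ξu−1)dx. Then dω³ ∧ ω¹ ∧ ω² ∧ ω³ = −12 ξ³ e^{2v}(ξu − 1) dx∧dy∧du∧dv∧dξ. In particular, the rank-2 distribution D = ker(ω¹,ω²,ω³) satisfies [D,[D,D]] = Tℝ⁵ at every point where ξ³(ξu−1) ≠ 0. -/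
set_option maxHeartbeats 2000000
set_option synthInstance.maxHeartbeats 1000000


private noncomputable abbrev eI (i : Fin 5) : ExteriorAlgebra ℝ (Module.Dual ℝ (Fin 5 → ℝ)) :=
  ExteriorAlgebra.ι ℝ (LinearMap.proj i)

private lemma eI_sq (i : Fin 5) : eI i * eI i = 0 := ExteriorAlgebra.ι_sq_zero _

private lemma eI_sq' (i : Fin 5) (x : ExteriorAlgebra ℝ (Module.Dual ℝ (Fin 5 → ℝ))) :
    eI i * (eI i * x) = 0 := by rw [← mul_assoc, eI_sq, zero_mul]

private lemma eI_swap (i j : Fin 5) : eI i * eI j = -(eI j * eI i) := by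
  have := ExteriorAlgebra.ι_add_mul_swap (R := ℝ)
    (LinearMap.proj i : Module.Dual ℝ (Fin 5 → ℝ)) (LinearMap.proj j)
  linear_combination (norm := noncomm_ring) this

private lemma eI_swap' (i j : Fin 5) (x : ExteriorAlgebra ℝ (Module.Dual ℝ (Fin 5 → ℝ))) :
    eI i * (eI j * x) = -(eI j * (eI i * x)) := by
  rw [← mul_assoc, eI_swap, neg_mul, mul_assoc]

private lemma hasFDerivAt_coord (i : Fin 5) (q : Fin 5 → ℝ) :
    HasFDerivAt (fun p : Fin 5 → ℝ => p i)
      (ContinuousLinearMap.proj i : (Fin 5 → ℝ) →L[ℝ] ℝ) q :=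
  (ContinuousLinearMap.proj i : (Fin 5 → ℝ) →L[ℝ] ℝ).hasFDerivAt

private lemma df_a30 (q w : Fin 5 → ℝ) :
    fderiv ℝ (fun p : Fin 5 → ℝ => -4 * Real.exp (2 * p 3) * p 4 ^ 2 * (p 4 * p 2 - 1)) q w
      = (-4 * Real.exp (2 * q 3) * q 4 ^ 3) * w 2
        + (-8 * Real.exp (2 * q 3) * q 4 ^ 2 * (q 4 * q 2 - 1)) * w 3
        + (-4 * Real.exp (2 * q 3) * (3 * q 4 ^ 2 * q 2 - 2 * q 4)) * w 4 := by
  have he : (fun p : Fin 5 → ℝ => -4 * Real.exp (2 * p 3) * p 4 ^ 2 * (p 4 * p 2 - 1))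
      = (fun p : Fin 5 → ℝ => -4 * Real.exp (2 * p 3) * (p 4 * p 4) * (p 4 * p 2 - 1)) := by
    funext p; ring
  rw [he]
  have h : HasFDerivAt
      (fun p : Fin 5 → ℝ => -4 * Real.exp (2 * p 3) * (p 4 * p 4) * (p 4 * p 2 - 1)) _ q :=
    ((((hasFDerivAt_coord 3 q).const_mul 2).exp.const_mul (-4)).mul
        ((hasFDerivAt_coord 4 q).mul (hasFDerivAt_coord 4 q))).mul
      (((hasFDerivAt_coord 4 q).mul (hasFDerivAt_coord 2 q)).sub_const 1)
  rw [h.fderiv]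
  simp [smul_eq_mul]
  ring




private lemma dcoord (i : Fin 5) (q w : Fin 5 → ℝ) :
    fderiv ℝ (fun p : Fin 5 → ℝ => p i) q w = w i := by
  rw [(hasFDerivAt_coord i q).fderiv]; rfl

private lemma dY1_2 (q w : Fin 5 → ℝ) :
    fderiv ℝ (fun q : Fin 5 → ℝ => q 4 * q 2 - 1) q w = q 4 * w 2 + q 2 * w 4 := by
  have h : HasFDerivAt (fun q : Fin 5 → ℝ => q 4 * q 2 - 1) _ q :=
    ((hasFDerivAt_coord 4 q).mul (hasFDerivAt_coord 2 q)).sub_const 1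
  rw [h.fderiv]; simp [smul_eq_mul]; try ring

private lemma dY2_2 (q w : Fin 5 → ℝ) :
    fderiv ℝ (fun q : Fin 5 → ℝ => 2 * Real.exp (2 * q 3) * (q 4 * q 2 - 1)) q w
      = 4 * Real.exp (2 * q 3) * (q 4 * q 2 - 1) * w 3
        + 2 * Real.exp (2 * q 3) * (q 4 * w 2 + q 2 * w 4) := by
  have h : HasFDerivAt (fun q : Fin 5 → ℝ => 2 * Real.exp (2 * q 3) * (q 4 * q 2 - 1)) _ q :=
    (((hasFDerivAt_coord 3 q).const_mul 2).exp.const_mul 2).mul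
      (((hasFDerivAt_coord 4 q).mul (hasFDerivAt_coord 2 q)).sub_const 1)
  rw [h.fderiv]; simp [smul_eq_mul]; try ring

private lemma dY2_4 (q w : Fin 5 → ℝ) :
    fderiv ℝ (fun q : Fin 5 → ℝ => 4 * Real.exp (2 * q 3) * (q 4 * q 4) * (q 4 * q 2 - 1)) q w
      = (4 * Real.exp (2 * q 3) * (q 4 * q 4 * q 4)) * w 2
        + (8 * Real.exp (2 * q 3) * (q 4 * q 4) * (q 4 * q 2 - 1)) * w 3
        + (4 * Real.exp (2 * q 3) * (3 * (q 4 * q 4) * q 2 - 2 * q 4)) * w 4 := by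
  have h : HasFDerivAt
      (fun q : Fin 5 → ℝ => 4 * Real.exp (2 * q 3) * (q 4 * q 4) * (q 4 * q 2 - 1)) _ q :=
    ((((hasFDerivAt_coord 3 q).const_mul 2).exp.const_mul 4).mul
        ((hasFDerivAt_coord 4 q).mul (hasFDerivAt_coord 4 q))).mul
      (((hasFDerivAt_coord 4 q).mul (hasFDerivAt_coord 2 q)).sub_const 1)
  rw [h.fderiv]; simp [smul_eq_mul]; try ring

private lemma dB_2 (q w : Fin 5 → ℝ) :
    fderiv ℝ (fun q : Fin 5 → ℝ =>
        -4 * Real.exp (2 * q 3) * q 4 * ((q 4 * q 2 - 1) * (q 4 * q 2 - 1))) q w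
      = (-8 * Real.exp (2 * q 3) * (q 4 * q 4) * (q 4 * q 2 - 1)) * w 2
        + (-8 * Real.exp (2 * q 3) * q 4 * ((q 4 * q 2 - 1) * (q 4 * q 2 - 1))) * w 3
        + (-4 * Real.exp (2 * q 3) * (q 4 * q 2 - 1) * (3 * (q 4 * q 2) - 1)) * w 4 := by
  have h : HasFDerivAt (fun q : Fin 5 → ℝ =>
      -4 * Real.exp (2 * q 3) * q 4 * ((q 4 * q 2 - 1) * (q 4 * q 2 - 1))) _ q :=
    ((((hasFDerivAt_coord 3 q).const_mul 2).exp.const_mul (-4)).mul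
        (hasFDerivAt_coord 4 q)).mul
      ((((hasFDerivAt_coord 4 q).mul (hasFDerivAt_coord 2 q)).sub_const 1).mul
        (((hasFDerivAt_coord 4 q).mul (hasFDerivAt_coord 2 q)).sub_const 1))
  rw [h.fderiv]; simp [smul_eq_mul]; try ring

private lemma dB_3 (q w : Fin 5 → ℝ) :
    fderiv ℝ (fun q : Fin 5 → ℝ =>
        -4 * Real.exp (2 * q 3) * (q 4 * q 4) * (q 4 * q 2 - 1)) q w
      = (-4 * Real.exp (2 * q 3) * (q 4 * q 4 * q 4)) * w 2
        + (-8 * Real.exp (2 * q 3) * (q 4 * q 4) * (q 4 * q 2 - 1)) * w 3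
        + (-4 * Real.exp (2 * q 3) * (3 * (q 4 * q 4) * q 2 - 2 * q 4)) * w 4 := by
  have h : HasFDerivAt (fun q : Fin 5 → ℝ =>
      -4 * Real.exp (2 * q 3) * (q 4 * q 4) * (q 4 * q 2 - 1)) _ q :=
    ((((hasFDerivAt_coord 3 q).const_mul 2).exp.const_mul (-4)).mul
        ((hasFDerivAt_coord 4 q).mul (hasFDerivAt_coord 4 q))).mul
      (((hasFDerivAt_coord 4 q).mul (hasFDerivAt_coord 2 q)).sub_const 1)
  rw [h.fderiv]; simp [smul_eq_mul]; try ring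

private lemma dB_4 (q w : Fin 5 → ℝ) :
    fderiv ℝ (fun q : Fin 5 → ℝ =>
        12 * Real.exp (2 * q 3) * (q 4 * (q 4 * q 4)) * (q 4 * q 2 - 1)) q w
      = (12 * Real.exp (2 * q 3) * (q 4 * q 4 * q 4 * q 4)) * w 2
        + (24 * Real.exp (2 * q 3) * (q 4 * (q 4 * q 4)) * (q 4 * q 2 - 1)) * w 3
        + (12 * Real.exp (2 * q 3) * (4 * (q 4 * q 4 * q 4) * q 2 - 3 * (q 4 * q 4))) * w 4 := by
  have h : HasFDerivAt (fun q : Fin 5 → ℝ =>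
      12 * Real.exp (2 * q 3) * (q 4 * (q 4 * q 4)) * (q 4 * q 2 - 1)) _ q :=
    ((((hasFDerivAt_coord 3 q).const_mul 2).exp.const_mul 12).mul
        ((hasFDerivAt_coord 4 q).mul ((hasFDerivAt_coord 4 q).mul (hasFDerivAt_coord 4 q)))).mul
      (((hasFDerivAt_coord 4 q).mul (hasFDerivAt_coord 2 q)).sub_const 1)
  rw [h.fderiv]; simp [smul_eq_mul]; try ring

private noncomputable def Y1f : (Fin 5 → ℝ) → (Fin 5 → ℝ) :=
  fun q => ![0, 0, q 4 * q 2 - 1, q 4, 0]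

private noncomputable def Y2f : (Fin 5 → ℝ) → (Fin 5 → ℝ) :=
  fun q => ![1, q 4, 2 * Real.exp (2 * q 3) * (q 4 * q 2 - 1), 0,
    4 * Real.exp (2 * q 3) * (q 4 * q 4) * (q 4 * q 2 - 1)]

private noncomputable def Bf : (Fin 5 → ℝ) → (Fin 5 → ℝ) :=
  fun q => ![0, 0, -4 * Real.exp (2 * q 3) * q 4 * ((q 4 * q 2 - 1) * (q 4 * q 2 - 1)),
    -4 * Real.exp (2 * q 3) * (q 4 * q 4) * (q 4 * q 2 - 1),
    12 * Real.exp (2 * q 3) * (q 4 * (q 4 * q 4)) * (q 4 * q 2 - 1)]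

private noncomputable def vB1 : (Fin 5 → ℝ) → (Fin 5 → ℝ) :=
  fun q => ![0, 0,
    -12 * Real.exp (2 * q 3) * q 4 ^ 2 + 36 * q 2 * Real.exp (2 * q 3) * q 4 ^ 3
      - 24 * q 2 ^ 2 * Real.exp (2 * q 3) * q 4 ^ 4,
    24 * Real.exp (2 * q 3) * q 4 ^ 3 - 24 * q 2 * Real.exp (2 * q 3) * q 4 ^ 4,
    -36 * Real.exp (2 * q 3) * q 4 ^ 4 + 36 * q 2 * Real.exp (2 * q 3) * q 4 ^ 5]

private noncomputable def vB2 : (Fin 5 → ℝ) → (Fin 5 → ℝ) :=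
  fun q => ![0,
    12 * Real.exp (2 * q 3) * q 4 ^ 3 - 12 * q 2 * Real.exp (2 * q 3) * q 4 ^ 4,
    24 * Real.exp (2 * q 3) ^ 2 * q 4 ^ 2 - 72 * q 2 * Real.exp (2 * q 3) ^ 2 * q 4 ^ 3
      + 96 * q 2 ^ 2 * Real.exp (2 * q 3) ^ 2 * q 4 ^ 4
      - 48 * q 2 ^ 3 * Real.exp (2 * q 3) ^ 2 * q 4 ^ 5,
    -24 * Real.exp (2 * q 3) ^ 2 * q 4 ^ 3 + 72 * q 2 * Real.exp (2 * q 3) ^ 2 * q 4 ^ 4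
      - 48 * q 2 ^ 2 * Real.exp (2 * q 3) ^ 2 * q 4 ^ 5,
    72 * Real.exp (2 * q 3) ^ 2 * q 4 ^ 4 - 168 * q 2 * Real.exp (2 * q 3) ^ 2 * q 4 ^ 5
      + 96 * q 2 ^ 2 * Real.exp (2 * q 3) ^ 2 * q 4 ^ 6]




/-- For the M6N twistor coframe `ω¹, ω², ω³` on `ℝ⁵` (coordinates
`(x,y,u,v,ξ) ↔` indices `0,1,2,3,4`), one has
`dω³ ∧ ω¹ ∧ ω² ∧ ω³ = −12 ξ³ e^{2v}(ξu − 1) dx∧dy∧du∧dv∧dξ`, where forms are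
realized pointwise in the exterior algebra of the dual of `ℝ⁵`.  In particular,
at every point where `ξ³(ξu − 1) ≠ 0`, the rank-2 distribution
`D = ker(ω¹,ω²,ω³)` satisfies `[D,[D,D]] = Tℝ⁵`: there exist vector fields
`X₁, X₂` with values in `D` whose iterated brackets span `ℝ⁵` there. -/
theorem m6n_twistor_distribution_235 :
    let dx : Fin 5 → ExteriorAlgebra ℝ (Module.Dual ℝ (Fin 5 → ℝ)) :=
      fun i => ExteriorAlgebra.ι ℝ (LinearMap.proj i)
    let oneF : (Fin 5 → ((Fin 5 → ℝ) → ℝ)) → (Fin 5 → ℝ) →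
        ExteriorAlgebra ℝ (Module.Dual ℝ (Fin 5 → ℝ)) :=
      fun a p => ∑ i, a i p • dx i
    let dOneF : (Fin 5 → ((Fin 5 → ℝ) → ℝ)) → (Fin 5 → ℝ) →
        ExteriorAlgebra ℝ (Module.Dual ℝ (Fin 5 → ℝ)) :=
      fun a p => ∑ j, ∑ i, (fderiv ℝ (a i) p (Pi.single j 1)) • (dx j * dx i)
    -- ω¹ = 2e^{2v}ξ dx − 2e^{2v}ξu dy + ξ du − (ξu−1) dv
    let a1 : Fin 5 → ((Fin 5 → ℝ) → ℝ) :=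
      ![fun p => 2 * Real.exp (2 * p 3) * p 4,
        fun p => -2 * Real.exp (2 * p 3) * p 4 * p 2,
        fun p => p 4,
        fun p => -(p 4 * p 2 - 1),
        fun _ => 0]
    -- ω² = dy − ξ dx
    let a2 : Fin 5 → ((Fin 5 → ℝ) → ℝ) :=
      ![fun p => -(p 4), fun _ => 1, fun _ => 0, fun _ => 0, fun _ => 0]
    -- ω³ = dξ − 4e^{2v}ξ²(ξu−1) dx
    let a3 : Fin 5 → ((Fin 5 → ℝ) → ℝ) :=
      ![fun p => -4 * Real.exp (2 * p 3) * (p 4) ^ 2 * (p 4 * p 2 - 1),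
        fun _ => 0, fun _ => 0, fun _ => 0, fun _ => 1]
    let bkt : ((Fin 5 → ℝ) → (Fin 5 → ℝ)) → ((Fin 5 → ℝ) → (Fin 5 → ℝ)) →
        ((Fin 5 → ℝ) → (Fin 5 → ℝ)) :=
      fun X Y p i =>
        fderiv ℝ (fun q => Y q i) p (X p) - fderiv ℝ (fun q => X q i) p (Y p)
    -- the 5-form identity
    (∀ p : Fin 5 → ℝ,
      dOneF a3 p * oneF a1 p * oneF a2 p * oneF a3 p
        = (-12 * (p 4) ^ 3 * Real.exp (2 * p 3) * (p 4 * p 2 - 1)) •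
            (dx 0 * dx 1 * dx 2 * dx 3 * dx 4)) ∧
    -- (2,3,5) growth where ξ³(ξu−1) ≠ 0
    (∀ p : Fin 5 → ℝ, (p 4) ^ 3 * (p 4 * p 2 - 1) ≠ 0 →
      ∃ X₁ X₂ : (Fin 5 → ℝ) → (Fin 5 → ℝ),
        (∀ q, (∑ k, a1 k q * X₁ q k) = 0 ∧ (∑ k, a2 k q * X₁ q k) = 0 ∧
              (∑ k, a3 k q * X₁ q k) = 0) ∧
        (∀ q, (∑ k, a1 k q * X₂ q k) = 0 ∧ (∑ k, a2 k q * X₂ q k) = 0 ∧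
              (∑ k, a3 k q * X₂ q k) = 0) ∧
        Submodule.span ℝ
          {X₁ p, X₂ p, bkt X₁ X₂ p, bkt X₁ (bkt X₁ X₂) p, bkt X₂ (bkt X₁ X₂) p}
          = (⊤ : Submodule ℝ (Fin 5 → ℝ))) := by
  intro dx oneF dOneF a1 a2 a3 bkt
  refine ⟨fun p => ?_, fun p hp => ?_⟩
  · simp only [dx, oneF, dOneF, a1, a2, a3, Fin.sum_univ_five, Matrix.cons_val_zero,
      Matrix.cons_val_one, Matrix.head_cons, Matrix.cons_val_two, Matrix.tail_cons,
      Matrix.cons_val_three, Matrix.cons_val_four, fderiv_const_apply,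
      ContinuousLinearMap.zero_apply, zero_smul, add_zero, zero_add, df_a30, Pi.single_apply]
    norm_num [Fin.ext_iff]
    simp only [mul_add, add_mul, mul_assoc, smul_mul_assoc, mul_smul_comm, mul_neg, neg_mul,
      smul_neg, neg_neg,
      eI_sq, eI_sq', eI_swap 1 0, eI_swap 2 0, eI_swap 2 1, eI_swap 3 0, eI_swap 3 1, eI_swap 3 2,
      eI_swap 4 0, eI_swap 4 1, eI_swap 4 2, eI_swap 4 3,
      eI_swap' 1 0, eI_swap' 2 0, eI_swap' 2 1, eI_swap' 3 0, eI_swap' 3 1, eI_swap' 3 2,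
      eI_swap' 4 0, eI_swap' 4 1, eI_swap' 4 2, eI_swap' 4 3,
      mul_zero, zero_mul, smul_zero, add_zero, zero_add, sub_eq_add_neg]
    module
  · refine ⟨Y1f, Y2f, ?_, ?_, ?_⟩
    · intro q
      refine ⟨?_, ?_, ?_⟩ <;>
      · simp only [a1, a2, a3, Y1f, Fin.sum_univ_five, Matrix.cons_val_zero, Matrix.cons_val_one,
          Matrix.head_cons, Matrix.cons_val_two, Matrix.tail_cons, Matrix.cons_val_three,
          Matrix.cons_val_four]
        ring
    · intro q
      refine ⟨?_, ?_, ?_⟩ <;>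
      · simp only [a1, a2, a3, Y2f, Fin.sum_univ_five, Matrix.cons_val_zero, Matrix.cons_val_one,
          Matrix.head_cons, Matrix.cons_val_two, Matrix.tail_cons, Matrix.cons_val_three,
          Matrix.cons_val_four]
        ring
    · have hB : bkt Y1f Y2f = Bf := by
        funext q i
        fin_cases i <;>
          simp only [bkt, Y1f, Y2f, Bf, Matrix.cons_val_zero, Matrix.cons_val_one,
            Matrix.head_cons, Matrix.cons_val_two, Matrix.tail_cons, Matrix.cons_val_three,
            Matrix.cons_val_four, Fin.zero_eta, Fin.mk_one, Fin.reduceFinMk, Fin.isValue, dcoord, dY1_2, dY2_2, dY2_4,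
            fderiv_const_apply, ContinuousLinearMap.zero_apply] <;>
          ring
      have hb1 : bkt Y1f Bf p = vB1 p := by
        funext i
        fin_cases i <;>
          simp only [bkt, Y1f, Bf, vB1, Matrix.cons_val_zero, Matrix.cons_val_one,
            Matrix.head_cons, Matrix.cons_val_two, Matrix.tail_cons, Matrix.cons_val_three,
            Matrix.cons_val_four, Fin.zero_eta, Fin.mk_one, Fin.reduceFinMk, Fin.isValue,
            dcoord, dY1_2, dB_2, dB_3, dB_4,
            fderiv_const_apply, ContinuousLinearMap.zero_apply] <;>
          ring
      have hb2 : bkt Y2f Bf p = vB2 p := by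
        funext i
        fin_cases i <;>
          simp only [bkt, Y2f, Bf, vB2, Matrix.cons_val_zero, Matrix.cons_val_one,
            Matrix.head_cons, Matrix.cons_val_two, Matrix.tail_cons, Matrix.cons_val_three,
            Matrix.cons_val_four, Fin.zero_eta, Fin.mk_one, Fin.reduceFinMk, Fin.isValue,
            dcoord, dY1_2, dY2_2, dY2_4, dB_2, dB_3, dB_4,
            fderiv_const_apply, ContinuousLinearMap.zero_apply] <;>
          ring
      rw [hB, hb1, hb2]
      have hx : p 4 ≠ 0 := by
        intro h; apply hp; rw [h]; ring
      have hu : p 4 * p 2 - 1 ≠ 0 := by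
        intro h; apply hp; rw [h]; ring
      have hE : Real.exp (2 * p 3) ≠ 0 := Real.exp_ne_zero _
      set M : Matrix (Fin 5) (Fin 5) ℝ := Matrix.of ![Y1f p, Y2f p, Bf p, vB1 p, vB2 p] with hM
      have hdet : M.det = 1728 * Real.exp (2 * p 3) ^ 3 * p 4 ^ 9 * (p 4 * p 2 - 1) ^ 3 := by
        simp only [hM, Y1f, Y2f, Bf, vB1, vB2, Matrix.det_succ_row_zero, Fin.sum_univ_succ,
          Matrix.submatrix_apply, Matrix.submatrix_submatrix, Matrix.det_unique,
          Fin.default_eq_zero, Function.comp_apply, Fin.zero_succAbove, Fin.succ_succAbove_zero,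
          Fin.succ_succAbove_succ, Fin.val_zero, Fin.val_succ, Finset.univ_unique,
          Finset.sum_singleton, Matrix.of_apply, Matrix.cons_val', Matrix.cons_val_zero,
          Matrix.cons_val_succ, Matrix.empty_val', Matrix.cons_val_fin_one, pow_succ, pow_zero]
        ring
      have hdet0 : M.det ≠ 0 := by
        rw [hdet]
        exact mul_ne_zero (mul_ne_zero (mul_ne_zero (by norm_num) (pow_ne_zero _ hE))
          (pow_ne_zero _ hx)) (pow_ne_zero _ hu)
      have hli : LinearIndependent ℝ (fun i => M i) :=
        Matrix.linearIndependent_rows_iff_isUnit.2 ((Matrix.isUnit_iff_isUnit_det M).2 hdet0.isUnit)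
      have htop : Submodule.span ℝ (Set.range fun i => M i) = ⊤ :=
        hli.span_eq_top_of_card_eq_finrank (by simp)
      refine eq_top_iff.2 ?_
      rw [← htop]
      apply Submodule.span_mono
      rintro x ⟨i, rfl⟩
      fin_cases i
      · exact Set.mem_insert _ _
      · exact Set.mem_insert_of_mem _ (Set.mem_insert _ _)
      · exact Set.mem_insert_of_mem _ (Set.mem_insert_of_mem _ (Set.mem_insert _ _))
      · exact Set.mem_insert_of_mem _ (Set.mem_insert_of_mem _ (Set.mem_insert_of_mem _
          (Set.mem_insert _ _)))
      · exact Set.mem_insert_of_mem _ (Set.mem_insert_of_mem _ (Set.mem_insert_of_mem _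
          (Set.mem_insert_of_mem _ rfl)))
end

section
/- In the split real form g of Lie(G₂), fix a scalar a and define X₁ = f₁₀ + a Z₁ + e₁₀, X₂ = f₁₁, X₃ = f₂₁, X₄ = f₃₁, X₅ = f₃₂. Then the 7-dimensional subspace f = span{X₁, X₂, X₃, X₄, X₅, Z₂, f₀₁} is a Lie subalgebra of g (closed under the bracket). Moreover, the span n = span{X₂, X₃, X₄, X₅, f₀₁} is a nilpotent ideal of f isomorphic to the 5-dimensional Heisenberg Lie algebra, so f ≅ ℝ² ⋉ heis₅. -/
private lemma lie_span_span_mem {L : Type*} [LieRing L] [LieAlgebra ℝ L]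
    {s t : Set L} {T : Submodule ℝ L}
    (h : ∀ x ∈ s, ∀ y ∈ t, ⁅x, y⁆ ∈ T) :
    ∀ x ∈ Submodule.span ℝ s, ∀ y ∈ Submodule.span ℝ t, ⁅x, y⁆ ∈ T := by
  intro x hx
  induction hx using Submodule.span_induction with
  | mem u hu =>
    intro y hy
    induction hy using Submodule.span_induction with
    | mem v hv => exact h u hu v hv
    | zero => simp
    | add v w _ _ hv hw => rw [lie_add]; exact T.add_mem hv hw
    | smul c v _ hv => rw [lie_smul]; exact T.smul_mem c hv
  | zero => intro y _; simp
  | add u w _ _ hu hw => intro y hy; rw [add_lie]; exact T.add_mem (hu y hy) (hw y hy)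
  | smul c u _ hu => intro y hy; rw [smul_lie]; exact T.smul_mem c (hu y hy)



/-- In the split real form of `Lie(G₂)` (presented via its bracket table on the
relevant root vectors), with `X₁ = f₁₀ + a Z₁ + e₁₀`, `X₂ = f₁₁`, `X₃ = f₂₁`,
`X₄ = f₃₁`, `X₅ = f₃₂`, the span `f = ⟨X₁,...,X₅, Z₂, f₀₁⟩` is a 7-dimensional
Lie subalgebra; moreover `n = ⟨X₂,X₃,X₄,X₅, f₀₁⟩` is a nilpotent ideal of `f`
isomorphic to the 5-dimensional Heisenberg algebra, and the complement
`⟨X₁, Z₂⟩` is abelian, so `f ≅ ℝ² ⋉ heis₅`. -/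
theorem m7_symmetry_algebra {L : Type*} [LieRing L] [LieAlgebra ℝ L]
    (Z₁ Z₂ e₁₀ f₀₁ f₁₀ f₁₁ f₂₁ f₃₁ f₃₂ : L) (a : ℝ)
    (hind : LinearIndependent ℝ ![Z₁, Z₂, e₁₀, f₀₁, f₁₀, f₁₁, f₂₁, f₃₁, f₃₂])
    (hZZ : ⁅Z₁, Z₂⁆ = 0)
    (hZ1e10 : ⁅Z₁, e₁₀⁆ = e₁₀) (hZ2e10 : ⁅Z₂, e₁₀⁆ = 0)
    (hZ1f01 : ⁅Z₁, f₀₁⁆ = 0) (hZ2f01 : ⁅Z₂, f₀₁⁆ = -f₀₁)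
    (hZ1f10 : ⁅Z₁, f₁₀⁆ = -f₁₀) (hZ2f10 : ⁅Z₂, f₁₀⁆ = 0)
    (hZ1f11 : ⁅Z₁, f₁₁⁆ = -f₁₁) (hZ2f11 : ⁅Z₂, f₁₁⁆ = -f₁₁)
    (hZ1f21 : ⁅Z₁, f₂₁⁆ = (-2 : ℝ) • f₂₁) (hZ2f21 : ⁅Z₂, f₂₁⁆ = -f₂₁)
    (hZ1f31 : ⁅Z₁, f₃₁⁆ = (-3 : ℝ) • f₃₁) (hZ2f31 : ⁅Z₂, f₃₁⁆ = -f₃₁)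
    (hZ1f32 : ⁅Z₁, f₃₂⁆ = (-3 : ℝ) • f₃₂) (hZ2f32 : ⁅Z₂, f₃₂⁆ = (-2 : ℝ) • f₃₂)
    (he10f01 : ⁅e₁₀, f₀₁⁆ = 0)
    (he10f10 : ⁅e₁₀, f₁₀⁆ = (2 : ℝ) • Z₁ - (3 : ℝ) • Z₂)
    (he10f11 : ⁅e₁₀, f₁₁⁆ = (-3 : ℝ) • f₀₁)
    (he10f21 : ⁅e₁₀, f₂₁⁆ = (-2 : ℝ) • f₁₁)
    (he10f31 : ⁅e₁₀, f₃₁⁆ = f₂₁)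
    (he10f32 : ⁅e₁₀, f₃₂⁆ = 0)
    (hf01f10 : ⁅f₀₁, f₁₀⁆ = f₁₁)
    (hf01f11 : ⁅f₀₁, f₁₁⁆ = 0) (hf01f21 : ⁅f₀₁, f₂₁⁆ = 0)
    (hf01f31 : ⁅f₀₁, f₃₁⁆ = -f₃₂) (hf01f32 : ⁅f₀₁, f₃₂⁆ = 0)
    (hf10f11 : ⁅f₁₀, f₁₁⁆ = (-2 : ℝ) • f₂₁)
    (hf10f21 : ⁅f₁₀, f₂₁⁆ = (3 : ℝ) • f₃₁)
    (hf10f31 : ⁅f₁₀, f₃₁⁆ = 0) (hf10f32 : ⁅f₁₀, f₃₂⁆ = 0)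
    (hf11f21 : ⁅f₁₁, f₂₁⁆ = (-3 : ℝ) • f₃₂)
    (hf11f31 : ⁅f₁₁, f₃₁⁆ = 0) (hf11f32 : ⁅f₁₁, f₃₂⁆ = 0)
    (hf21f31 : ⁅f₂₁, f₃₁⁆ = 0) (hf21f32 : ⁅f₂₁, f₃₂⁆ = 0)
    (hf31f32 : ⁅f₃₁, f₃₂⁆ = 0) :
    let X₁ := f₁₀ + a • Z₁ + e₁₀
    let X₂ := f₁₁
    let X₃ := f₂₁
    let X₄ := f₃₁
    let X₅ := f₃₂
    let f : Submodule ℝ L := Submodule.span ℝ {X₁, X₂, X₃, X₄, X₅, Z₂, f₀₁}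
    let n : Submodule ℝ L := Submodule.span ℝ {X₂, X₃, X₄, X₅, f₀₁}
    -- f is a Lie subalgebra
    (∀ x ∈ f, ∀ y ∈ f, ⁅x, y⁆ ∈ f) ∧
    -- n is an ideal of f
    (∀ x ∈ f, ∀ y ∈ n, ⁅x, y⁆ ∈ n) ∧
    -- n is nilpotent (2-step)
    (∀ x ∈ n, ∀ y ∈ n, ∀ z ∈ n, ⁅x, ⁅y, z⁆⁆ = 0) ∧
    -- n is isomorphic to the 5-dimensional Heisenberg Lie algebra
    (∃ p₁ p₂ q₁ q₂ z : L,
      Submodule.span ℝ {p₁, p₂, q₁, q₂, z} = n ∧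
      LinearIndependent ℝ ![p₁, p₂, q₁, q₂, z] ∧
      ⁅p₁, q₁⁆ = z ∧ ⁅p₂, q₂⁆ = z ∧
      ⁅p₁, p₂⁆ = 0 ∧ ⁅p₁, q₂⁆ = 0 ∧ ⁅p₂, q₁⁆ = 0 ∧ ⁅q₁, q₂⁆ = 0 ∧
      ⁅p₁, z⁆ = 0 ∧ ⁅p₂, z⁆ = 0 ∧ ⁅q₁, z⁆ = 0 ∧ ⁅q₂, z⁆ = 0) ∧
    -- the complementary ℝ²-factor ⟨X₁, Z₂⟩ is abelian, so f ≅ ℝ² ⋉ heis₅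
    ⁅X₁, Z₂⁆ = 0 := by
  intro X₁ X₂ X₃ X₄ X₅ f n
  -- flipped table entries
  have s1 : ⁅f₁₀, Z₂⁆ = 0 := by rw [← lie_skew, hZ2f10, neg_zero]
  have s2 : ⁅e₁₀, Z₂⁆ = 0 := by rw [← lie_skew, hZ2e10, neg_zero]
  have s3 : ⁅f₁₀, f₀₁⁆ = -f₁₁ := by rw [← lie_skew, hf01f10]
  -- brackets among the generators of f (upper triangle)
  have b12 : ⁅X₁, X₂⁆ = (-a) • X₂ + (-2 : ℝ) • X₃ + (-3 : ℝ) • f₀₁ := by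
    simp only [X₁, X₂, X₃, add_lie, smul_lie, hf10f11, hZ1f11, he10f11]; module
  have b13 : ⁅X₁, X₃⁆ = (-2 : ℝ) • X₂ + (-2 * a) • X₃ + (3 : ℝ) • X₄ := by
    simp only [X₁, X₂, X₃, X₄, add_lie, smul_lie, hf10f21, hZ1f21, he10f21]; module
  have b14 : ⁅X₁, X₄⁆ = X₃ + (-3 * a) • X₄ := by
    simp only [X₁, X₃, X₄, add_lie, smul_lie, hf10f31, hZ1f31, he10f31]; module
  have b15 : ⁅X₁, X₅⁆ = (-3 * a) • X₅ := by
    simp only [X₁, X₅, add_lie, smul_lie, hf10f32, hZ1f32, he10f32]; module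
  have b1Z : ⁅X₁, Z₂⁆ = 0 := by
    simp only [X₁, add_lie, smul_lie, s1, s2, hZZ]; module
  have b1f : ⁅X₁, f₀₁⁆ = -X₂ := by
    simp only [X₁, X₂, add_lie, smul_lie, s3, hZ1f01, he10f01]; module
  have b23 : ⁅X₂, X₃⁆ = (-3 : ℝ) • X₅ := hf11f21
  have b24 : ⁅X₂, X₄⁆ = 0 := hf11f31
  have b25 : ⁅X₂, X₅⁆ = 0 := hf11f32
  have b2Z : ⁅X₂, Z₂⁆ = X₂ := by
    show ⁅f₁₁, Z₂⁆ = f₁₁; rw [← lie_skew, hZ2f11, neg_neg]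
  have b2f : ⁅X₂, f₀₁⁆ = 0 := by
    show ⁅f₁₁, f₀₁⁆ = 0; rw [← lie_skew, hf01f11, neg_zero]
  have b34 : ⁅X₃, X₄⁆ = 0 := hf21f31
  have b35 : ⁅X₃, X₅⁆ = 0 := hf21f32
  have b3Z : ⁅X₃, Z₂⁆ = X₃ := by
    show ⁅f₂₁, Z₂⁆ = f₂₁; rw [← lie_skew, hZ2f21, neg_neg]
  have b3f : ⁅X₃, f₀₁⁆ = 0 := by
    show ⁅f₂₁, f₀₁⁆ = 0; rw [← lie_skew, hf01f21, neg_zero]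
  have b45 : ⁅X₄, X₅⁆ = 0 := hf31f32
  have b4Z : ⁅X₄, Z₂⁆ = X₄ := by
    show ⁅f₃₁, Z₂⁆ = f₃₁; rw [← lie_skew, hZ2f31, neg_neg]
  have b4f : ⁅X₄, f₀₁⁆ = X₅ := by
    show ⁅f₃₁, f₀₁⁆ = f₃₂; rw [← lie_skew, hf01f31, neg_neg]
  have b5Z : ⁅X₅, Z₂⁆ = (2 : ℝ) • X₅ := by
    show ⁅f₃₂, Z₂⁆ = (2 : ℝ) • f₃₂; rw [← lie_skew, hZ2f32]; module
  have b5f : ⁅X₅, f₀₁⁆ = 0 := by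
    show ⁅f₃₂, f₀₁⁆ = 0; rw [← lie_skew, hf01f32, neg_zero]
  have bZf : ⁅Z₂, f₀₁⁆ = -f₀₁ := hZ2f01
  -- lower triangle
  have c21 : ⁅X₂, X₁⁆ = -((-a) • X₂ + (-2 : ℝ) • X₃ + (-3 : ℝ) • f₀₁) := by rw [← lie_skew, b12]
  have c31 : ⁅X₃, X₁⁆ = -((-2 : ℝ) • X₂ + (-2 * a) • X₃ + (3 : ℝ) • X₄) := by rw [← lie_skew, b13]
  have c41 : ⁅X₄, X₁⁆ = -(X₃ + (-3 * a) • X₄) := by rw [← lie_skew, b14]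
  have c51 : ⁅X₅, X₁⁆ = -((-3 * a) • X₅) := by rw [← lie_skew, b15]
  have cZ1 : ⁅Z₂, X₁⁆ = 0 := by rw [← lie_skew, b1Z, neg_zero]
  have cf1 : ⁅f₀₁, X₁⁆ = X₂ := by rw [← lie_skew, b1f, neg_neg]
  have c32 : ⁅X₃, X₂⁆ = (3 : ℝ) • X₅ := by rw [← lie_skew, b23]; module
  have c42 : ⁅X₄, X₂⁆ = 0 := by rw [← lie_skew, b24, neg_zero]
  have c52 : ⁅X₅, X₂⁆ = 0 := by rw [← lie_skew, b25, neg_zero]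
  have cZ2 : ⁅Z₂, X₂⁆ = -X₂ := by rw [← lie_skew, b2Z]
  have cf2 : ⁅f₀₁, X₂⁆ = 0 := by rw [← lie_skew, b2f, neg_zero]
  have c43 : ⁅X₄, X₃⁆ = 0 := by rw [← lie_skew, b34, neg_zero]
  have c53 : ⁅X₅, X₃⁆ = 0 := by rw [← lie_skew, b35, neg_zero]
  have cZ3 : ⁅Z₂, X₃⁆ = -X₃ := by rw [← lie_skew, b3Z]
  have cf3 : ⁅f₀₁, X₃⁆ = 0 := by rw [← lie_skew, b3f, neg_zero]
  have c54 : ⁅X₅, X₄⁆ = 0 := by rw [← lie_skew, b45, neg_zero]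
  have cZ4 : ⁅Z₂, X₄⁆ = -X₄ := by rw [← lie_skew, b4Z]
  have cf4 : ⁅f₀₁, X₄⁆ = -X₅ := by rw [← lie_skew, b4f]
  have cZ5 : ⁅Z₂, X₅⁆ = -((2 : ℝ) • X₅) := by rw [← lie_skew, b5Z]
  have cf5 : ⁅f₀₁, X₅⁆ = 0 := by rw [← lie_skew, b5f, neg_zero]
  have cfZ : ⁅f₀₁, Z₂⁆ = f₀₁ := by rw [← lie_skew, bZf, neg_neg]
  -- memberships
  have mX1 : X₁ ∈ f := Submodule.subset_span (by simp)
  have mX2 : X₂ ∈ f := Submodule.subset_span (by simp)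
  have mX3 : X₃ ∈ f := Submodule.subset_span (by simp)
  have mX4 : X₄ ∈ f := Submodule.subset_span (by simp)
  have mX5 : X₅ ∈ f := Submodule.subset_span (by simp)
  have mZ2 : Z₂ ∈ f := Submodule.subset_span (by simp)
  have mf01 : f₀₁ ∈ f := Submodule.subset_span (by simp)
  have nX2 : X₂ ∈ n := Submodule.subset_span (by simp)
  have nX3 : X₃ ∈ n := Submodule.subset_span (by simp)
  have nX4 : X₄ ∈ n := Submodule.subset_span (by simp)
  have nX5 : X₅ ∈ n := Submodule.subset_span (by simp)
  have nf01 : f₀₁ ∈ n := Submodule.subset_span (by simp)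
  refine ⟨?_, ?_, ?_, ?_, b1Z⟩
  · -- f is a Lie subalgebra
    refine lie_span_span_mem ?_
    intro u hu v hv
    simp only [Set.mem_insert_iff, Set.mem_singleton_iff] at hu hv
    rcases hu with h | h | h | h | h | h | h <;>
      rcases hv with h | h | h | h | h | h | h <;> subst u v <;>
      simp only [lie_self, b12, b13, b14, b15, b1Z, b1f, b23, b24, b25, b2Z, b2f, b34, b35,
        b3Z, b3f, b45, b4Z, b4f, b5Z, b5f, bZf, c21, c31, c41, c51, cZ1, cf1, c32, c42, c52,
        cZ2, cf2, c43, c53, cZ3, cf3, c54, cZ4, cf4, cZ5, cf5, cfZ] <;>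
      (repeat first
        | exact mX1 | exact mX2 | exact mX3 | exact mX4 | exact mX5 | exact mZ2 | exact mf01
        | exact Submodule.zero_mem _
        | apply Submodule.neg_mem | apply Submodule.add_mem | apply Submodule.smul_mem)
  · -- n is an ideal of f
    refine lie_span_span_mem ?_
    intro u hu v hv
    simp only [Set.mem_insert_iff, Set.mem_singleton_iff] at hu hv
    rcases hu with h | h | h | h | h | h | h <;>
      rcases hv with h | h | h | h | h <;> subst u v <;>
      simp only [lie_self, b12, b13, b14, b15, b1f, b23, b24, b25, b2f, b34, b35,
        b3f, b45, b4f, b5f, c32, c42, c52, cZ2, cf2, c43, c53, cZ3, cf3, c54, cZ4,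
        cf4, cZ5, cf5, bZf] <;>
      (repeat first
        | exact nX2 | exact nX3 | exact nX4 | exact nX5 | exact nf01
        | exact Submodule.zero_mem _
        | apply Submodule.neg_mem | apply Submodule.add_mem | apply Submodule.smul_mem)
  · -- n is 2-step nilpotent
    have hder : ∀ y ∈ n, ∀ z ∈ n, ⁅y, z⁆ ∈ Submodule.span ℝ ({X₅} : Set L) := by
      refine lie_span_span_mem ?_
      intro u hu v hv
      simp only [Set.mem_insert_iff, Set.mem_singleton_iff] at hu hv
      rcases hu with h | h | h | h | h <;>
        rcases hv with h | h | h | h | h <;> subst u v <;>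
        simp only [lie_self, b23, b24, b25, b2f, b34, b35, b3f, b45, b4f, b5f,
          c32, c42, c52, cf2, c43, c53, cf3, c54, cf4, cf5] <;>
        (repeat first
          | exact Submodule.subset_span rfl
          | exact Submodule.zero_mem _
          | apply Submodule.neg_mem | apply Submodule.add_mem | apply Submodule.smul_mem)
    have hcen : ∀ x ∈ n, ⁅x, X₅⁆ = 0 := by
      intro x hx
      have h0 : ∀ u ∈ ({X₂, X₃, X₄, X₅, f₀₁} : Set L), ∀ v ∈ ({X₅} : Set L),
          ⁅u, v⁆ ∈ (⊥ : Submodule ℝ L) := by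
        intro u hu v hv
        simp only [Set.mem_insert_iff, Set.mem_singleton_iff] at hu hv
        subst v
        rcases hu with h | h | h | h | h <;> subst u <;>
          simp only [lie_self, b25, b35, b45, cf5, Submodule.mem_bot]
      have := lie_span_span_mem h0 x hx X₅ (Submodule.subset_span rfl)
      simpa using this
    intro x hx y hy z hz
    obtain ⟨c, hc⟩ := Submodule.mem_span_singleton.mp (hder y hy z hz)
    rw [← hc, lie_smul, hcen x hx, smul_zero]
  · -- Heisenberg structure
    refine ⟨X₂, f₀₁, (-1/3 : ℝ) • X₃, -X₄, X₅, ?_, ?_, ?_, ?_, ?_, ?_, ?_, ?_, ?_, ?_, ?_, ?_⟩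
    · apply le_antisymm
      · rw [Submodule.span_le]
        intro v hv
        simp only [Set.mem_insert_iff, Set.mem_singleton_iff] at hv
        rcases hv with rfl | rfl | rfl | rfl | rfl
        · exact nX2
        · exact nf01
        · exact Submodule.smul_mem _ _ nX3
        · exact Submodule.neg_mem _ nX4
        · exact nX5
      · rw [Submodule.span_le]
        intro v hv
        simp only [Set.mem_insert_iff, Set.mem_singleton_iff] at hv
        rcases hv with h | h | h | h | h <;> subst v
        · exact Submodule.subset_span (by simp)
        · have hm : (-3 : ℝ) • ((-1/3 : ℝ) • X₃) ∈
              Submodule.span ℝ ({X₂, f₀₁, (-1/3 : ℝ) • X₃, -X₄, X₅} : Set L) :=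
            Submodule.smul_mem _ _ (Submodule.subset_span (by simp))
          have h3 : X₃ ∈
              Submodule.span ℝ ({X₂, f₀₁, (-1/3 : ℝ) • X₃, -X₄, X₅} : Set L) := by
            convert hm using 2
            module
          exact h3
        · have hm : -(-X₄) ∈
              Submodule.span ℝ ({X₂, f₀₁, (-1/3 : ℝ) • X₃, -X₄, X₅} : Set L) :=
            Submodule.neg_mem _ (Submodule.subset_span (by simp))
          have h4 : X₄ ∈
              Submodule.span ℝ ({X₂, f₀₁, (-1/3 : ℝ) • X₃, -X₄, X₅} : Set L) := by
            convert hm using 2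
            module
          exact h4
        · exact Submodule.subset_span (by simp)
        · exact Submodule.subset_span (by simp)
    · -- linear independence
      rw [Fintype.linearIndependent_iff]
      intro g hg
      have h9 := Fintype.linearIndependent_iff.mp hind
      have hsum : ∑ j : Fin 9,
          (![0, 0, 0, g 1, 0, g 0, (-1/3 : ℝ) * g 2, -(g 3), g 4]) j •
            (![Z₁, Z₂, e₁₀, f₀₁, f₁₀, f₁₁, f₂₁, f₃₁, f₃₂]) j = 0 := by
        simp only [Fin.sum_univ_five, Matrix.cons_val_zero, Matrix.cons_val_one,
          Matrix.head_cons, Matrix.cons_val_two, Matrix.tail_cons, Matrix.cons_val_three,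
          Matrix.cons_val_four] at hg
        simp only [X₂, X₃, X₄, X₅] at hg
        simp only [Fin.sum_univ_succ, Fin.sum_univ_zero, Matrix.cons_val_zero,
          Matrix.cons_val_succ]
        linear_combination (norm := module) hg
      have hall := h9 _ hsum
      intro i
      have h5 : g 0 = 0 := hall 5
      have h3 : g 1 = 0 := hall 3
      have h6 : -1 / 3 * g 2 = 0 := hall 6
      have h7 : -g 3 = 0 := hall 7
      have h8 : g 4 = 0 := hall 8
      fin_cases i
      · exact h5
      · exact h3
      · show g 2 = 0; linarith
      · show g 3 = 0; linarith
      · exact h8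
    · rw [lie_smul, b23]; module
    · rw [lie_neg, cf4, neg_neg]
    · exact b2f
    · rw [lie_neg, b24, neg_zero]
    · rw [lie_smul, cf3, smul_zero]
    · rw [smul_lie, lie_neg, b34, neg_zero, smul_zero]
    · exact b25
    · exact cf5
    · rw [smul_lie, b35, smul_zero]
    · rw [neg_lie, b45, neg_zero]
end
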